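/- Integrated Gamma identity at the invariant measure (Lemma 4.1): for every smooth compactly supported Φ : ℝ^d → ℝ, ∫_{ℝ^d} ( Γ₂(Φ,Φ)(x) + Γ_I(Φ,Φ)(x) ) π(x) dx = ∫_{ℝ^d} L̃Φ(x) · ( L̃Φ(x) + ⟨∇Φ(x), γ(x)⟩ ) π(x) dx. -/

import Mathlib

open MeasureTheory
open scoped BigOperators

noncomputable section

/-- `i`-th partial derivative of `f` at `x`, in the coordinate direction `i`. -/
def pderiv' {d : ℕ} (f : EuclideanSpace ℝ (Fin d) → ℝ) (i : Fin d)
    (x : EuclideanSpace ℝ (Fin d)) : ℝ :=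
  fderiv ℝ f x (EuclideanSpace.single i 1)

/-- second partial derivative `∂_i ∂_j f` at `x`. -/
def pderiv2 {d : ℕ} (f : EuclideanSpace ℝ (Fin d) → ℝ) (i j : Fin d)
    (x : EuclideanSpace ℝ (Fin d)) : ℝ :=
  pderiv' (fun y => pderiv' f j y) i x

/-- Laplacian `Δf`. -/
def lap {d : ℕ} (f : EuclideanSpace ℝ (Fin d) → ℝ) (x : EuclideanSpace ℝ (Fin d)) : ℝ :=
  ∑ i, pderiv2 f i i x

/-- carré du champ `Γ₁(g,h) = ⟨∇g, ∇h⟩`. -/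
def Gamma1 {d : ℕ} (g h : EuclideanSpace ℝ (Fin d) → ℝ) (x : EuclideanSpace ℝ (Fin d)) : ℝ :=
  ∑ i, pderiv' g i x * pderiv' h i x

/-- generator `L̃ h = ⟨∇ log π, ∇h⟩ + Δh`. -/
def genL {d : ℕ} (π h : EuclideanSpace ℝ (Fin d) → ℝ) (x : EuclideanSpace ℝ (Fin d)) : ℝ :=
  Gamma1 (fun y => Real.log (π y)) h x + lap h x

/-- Gamma two operator `Γ₂(f,f) = ½ L̃ Γ₁(f,f) − Γ₁(L̃f, f)`. -/
def Gamma2 {d : ℕ} (π f : EuclideanSpace ℝ (Fin d) → ℝ) (x : EuclideanSpace ℝ (Fin d)) : ℝ :=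
  (1/2 : ℝ) * genL π (fun y => Gamma1 f f y) x - Gamma1 (fun y => genL π f y) f x

/-- information Gamma operator `Γ_I(f,f) = −½⟨γ, ∇Γ₁(f,f)⟩ + (L̃f)·⟨∇f, γ⟩`. -/
def GammaI {d : ℕ} (π : EuclideanSpace ℝ (Fin d) → ℝ)
    (γ : EuclideanSpace ℝ (Fin d) → EuclideanSpace ℝ (Fin d))
    (f : EuclideanSpace ℝ (Fin d) → ℝ) (x : EuclideanSpace ℝ (Fin d)) : ℝ :=
  -(1/2 : ℝ) * (∑ i, γ x i * pderiv' (fun y => Gamma1 f f y) i x)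
    + genL π f x * (∑ i, pderiv' f i x * γ x i)

/-- the tensor `ℜ` of the paper:
`ℜ_{ij} = −∂²_{ij} log π + ((3−2d)/8) γ_i γ_j − (1/8) δ_{ij} Σ_k γ_k²
          + ½(γ_i ∂_j log π + γ_j ∂_i log π)`. -/
def Rtensor {d : ℕ} (π : EuclideanSpace ℝ (Fin d) → ℝ)
    (γ : EuclideanSpace ℝ (Fin d) → EuclideanSpace ℝ (Fin d))
    (i j : Fin d) (x : EuclideanSpace ℝ (Fin d)) : ℝ :=
  -pderiv2 (fun y => Real.log (π y)) i j x
    + ((3 - 2 * (d : ℝ)) / 8) * γ x i * γ x j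
    - (1/8 : ℝ) * (if i = j then ∑ k, (γ x k) ^ 2 else 0)
    + (1/2 : ℝ) * (γ x i * pderiv' (fun y => Real.log (π y)) j x
        + γ x j * pderiv' (fun y => Real.log (π y)) i x)

/-- the modified Hessian matrix `𝔥ess f`. -/
def hessM {d : ℕ} (γ : EuclideanSpace ℝ (Fin d) → EuclideanSpace ℝ (Fin d))
    (f : EuclideanSpace ℝ (Fin d) → ℝ) (i j : Fin d) (x : EuclideanSpace ℝ (Fin d)) : ℝ :=
  if i = j then
    pderiv2 f i i x + (1/2 : ℝ) * (∑ k, γ x k * pderiv' f k x)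
      - (1/2 : ℝ) * γ x i * pderiv' f i x
  else
    pderiv2 f i j x - (1/4 : ℝ) * (γ x i * pderiv' f j x + γ x j * pderiv' f i x)

/-- right-hand side of the Fokker–Planck equation `−∇·(p b) + Δp` with drift
`b = ∇ log π − γ`, evaluated at a density `p`. -/
def FPrhs {d : ℕ} (π : EuclideanSpace ℝ (Fin d) → ℝ)
    (γ : EuclideanSpace ℝ (Fin d) → EuclideanSpace ℝ (Fin d))
    (p : EuclideanSpace ℝ (Fin d) → ℝ) (x : EuclideanSpace ℝ (Fin d)) : ℝ :=
  -(∑ i, pderiv' (fun y => p y * (pderiv' (fun z => Real.log (π z)) i y - γ y i)) i x)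
    + lap p x

/-- `L̃* p = −∇·(p ∇ log π) + Δp`. -/
def Ltilstar {d : ℕ} (π p : EuclideanSpace ℝ (Fin d) → ℝ)
    (x : EuclideanSpace ℝ (Fin d)) : ℝ :=
  -(∑ i, pderiv' (fun y => p y * pderiv' (fun z => Real.log (π z)) i y) i x) + lap p x

/-- Arnold–Carlen tensor `(ℜ_AC)_{ij} = −∂²_{ij} log π − ½(∂_i γ_j + ∂_j γ_i)`. -/
def RAC {d : ℕ} (π : EuclideanSpace ℝ (Fin d) → ℝ)
    (γ : EuclideanSpace ℝ (Fin d) → EuclideanSpace ℝ (Fin d))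
    (i j : Fin d) (x : EuclideanSpace ℝ (Fin d)) : ℝ :=
  -pderiv2 (fun y => Real.log (π y)) i j x
    - (1/2 : ℝ) * (pderiv' (fun y => γ y j) i x + pderiv' (fun y => γ y i) j x)

/-! By the product rule and `π ∂ᵢ log π = ∂ᵢ π`, the integrand `(Γ₂(Φ,Φ) + Γ_I(Φ,Φ)) π` equals
`L̃Φ (L̃Φ + ⟨∇Φ, γ⟩) π + ½ Γ₁(Φ,Φ) ∇·(πγ) + ∇·V` with `V = ½ π ∇Γ₁(Φ,Φ) − π L̃Φ ∇Φ − ½ Γ₁(Φ,Φ) π γ`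
(`gammaFlux`). The middle term vanishes by stationarity, and `V` is smooth with compact support,
so its divergence integrates to zero. -/

open scoped ContDiff

section PartialDerivative

variable {d : ℕ} {f g : EuclideanSpace ℝ (Fin d) → ℝ} {x : EuclideanSpace ℝ (Fin d)}

theorem pderiv'_mul (hf : DifferentiableAt ℝ f x) (hg : DifferentiableAt ℝ g x) (i : Fin d) :
    pderiv' (fun y => f y * g y) i x = pderiv' f i x * g x + f x * pderiv' g i x := by
  simp only [pderiv', fderiv_fun_mul hf hg, add_apply, smul_apply, smul_eq_mul]
  ring

theorem pderiv'_sub (hf : DifferentiableAt ℝ f x) (hg : DifferentiableAt ℝ g x) (i : Fin d) :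
    pderiv' (fun y => f y - g y) i x = pderiv' f i x - pderiv' g i x := by
  simp only [pderiv', fderiv_fun_sub hf hg, sub_apply]

theorem pderiv'_const (c : ℝ) (i : Fin d) : pderiv' (fun _ => c) i x = 0 := by
  simp [pderiv']

theorem pderiv'_log_mul_self (hf : DifferentiableAt ℝ f x) (hfx : f x ≠ 0) (i : Fin d) :
    pderiv' (fun y => Real.log (f y)) i x * f x = pderiv' f i x := by
  rw [pderiv', (hf.hasFDerivAt.log hfx).fderiv, smul_apply, smul_eq_mul, mul_right_comm,
    inv_mul_cancel₀ hfx, one_mul]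
  rfl

theorem ContDiff.pderiv' (hf : ContDiff ℝ ∞ f) (i : Fin d) : ContDiff ℝ ∞ (pderiv' f i) :=
  (hf.fderiv_right le_rfl).clm_apply contDiff_const

theorem HasCompactSupport.pderiv' (hf : HasCompactSupport f) (i : Fin d) :
    HasCompactSupport (pderiv' f i) :=
  hf.fderiv_apply (𝕜 := ℝ) _

theorem integrable_pderiv' (hf : ContDiff ℝ 1 f) (hfc : HasCompactSupport f) (i : Fin d) :
    Integrable (pderiv' f i) :=
  ((hf.continuous_fderiv one_ne_zero).clm_apply continuous_const).integrable_of_hasCompactSupport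
    (hfc.pderiv' i)

theorem integral_pderiv'_eq_zero (hf : ContDiff ℝ 1 f) (hfc : HasCompactSupport f) (i : Fin d) :
    ∫ x, pderiv' f i x = 0 := by
  have h := integral_mul_fderiv_eq_neg_fderiv_mul_of_integrable (μ := volume)
    (f := fun _ => (1 : ℝ)) (g := f) (v := EuclideanSpace.single i 1) (by simp)
    (by simp only [one_mul]; exact integrable_pderiv' hf hfc i)
    (by simpa only [one_mul] using hf.continuous.integrable_of_hasCompactSupport hfc)
    (fun _ _ => differentiableAt_const _) (fun y _ => hf.differentiable one_ne_zero y)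
  simpa [pderiv'] using h

theorem integral_add_sum_pderiv' {V : Fin d → EuclideanSpace ℝ (Fin d) → ℝ}
    (f : EuclideanSpace ℝ (Fin d) → ℝ) (hV : ∀ i, ContDiff ℝ 1 (V i))
    (hVc : ∀ i, HasCompactSupport (V i)) :
    ∫ x, (f x + ∑ i, pderiv' (V i) i x) = ∫ x, f x := by
  have hdiv_int : Integrable (fun x => ∑ i, pderiv' (V i) i x) :=
    integrable_finsetSum _ fun i _ => integrable_pderiv' (hV i) (hVc i) i
  have hdiv_zero : ∫ x, ∑ i, pderiv' (V i) i x = 0 := by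
    rw [integral_finsetSum _ fun i _ => integrable_pderiv' (hV i) (hVc i) i]
    exact Finset.sum_eq_zero fun i _ => integral_pderiv'_eq_zero (hV i) (hVc i) i
  by_cases hf : Integrable f
  · rw [integral_add hf hdiv_int, hdiv_zero, add_zero]
  · rw [integral_undef hf,
      integral_undef ((integrable_add_iff_integrable_left' hdiv_int).not.mpr hf)]

end PartialDerivative

section GammaCalculus

variable {d : ℕ} {π f g h : EuclideanSpace ℝ (Fin d) → ℝ}

theorem ContDiff.gamma1 (hg : ContDiff ℝ ∞ g) (hh : ContDiff ℝ ∞ h) :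
    ContDiff ℝ ∞ (Gamma1 g h) :=
  ContDiff.sum fun i _ => (hg.pderiv' i).mul (hh.pderiv' i)

theorem ContDiff.lap (hf : ContDiff ℝ ∞ f) : ContDiff ℝ ∞ (lap f) :=
  ContDiff.sum fun i _ => (hf.pderiv' i).pderiv' i

theorem ContDiff.genL (hπ : ContDiff ℝ ∞ π) (hπ0 : ∀ x, π x ≠ 0) (hf : ContDiff ℝ ∞ f) :
    ContDiff ℝ ∞ (genL π f) :=
  ((hπ.log hπ0).gamma1 hf).add hf.lap

theorem HasCompactSupport.gamma1 (g : EuclideanSpace ℝ (Fin d) → ℝ) (hh : HasCompactSupport h) :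
    HasCompactSupport (Gamma1 g h) := by
  have hsum : Gamma1 g h = ∑ i, _root_.pderiv' g i * _root_.pderiv' h i := by ext; simp [Gamma1]
  exact hsum ▸ .finset_sum fun i _ => (hh.pderiv' i).mul_left

end GammaCalculus

section GammaIdentity

def gammaFlux {d : ℕ} (π : EuclideanSpace ℝ (Fin d) → ℝ)
    (γ : EuclideanSpace ℝ (Fin d) → EuclideanSpace ℝ (Fin d))
    (Φ : EuclideanSpace ℝ (Fin d) → ℝ) (i : Fin d) (y : EuclideanSpace ℝ (Fin d)) : ℝ :=
  π y * ((1/2 : ℝ) * pderiv' (Gamma1 Φ Φ) i y - genL π Φ y * pderiv' Φ i y)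
    - (1/2 : ℝ) * Gamma1 Φ Φ y * (π y * γ y i)

variable {d : ℕ} {π Φ : EuclideanSpace ℝ (Fin d) → ℝ}
  {γ : EuclideanSpace ℝ (Fin d) → EuclideanSpace ℝ (Fin d)}

theorem ContDiff.gammaFlux (hπ : ContDiff ℝ ∞ π) (hπ0 : ∀ x, π x ≠ 0) (hγ : ContDiff ℝ ∞ γ)
    (hΦ : ContDiff ℝ ∞ Φ) (i : Fin d) : ContDiff ℝ ∞ (gammaFlux π γ Φ i) := by
  have hγi : ContDiff ℝ ∞ (fun y => γ y i) := contDiff_euclidean.mp hγ i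
  have hG := hΦ.gamma1 hΦ
  exact (hπ.mul ((contDiff_const.mul (hG.pderiv' i)).sub ((hπ.genL hπ0 hΦ).mul (hΦ.pderiv' i))))
    |>.sub ((contDiff_const.mul hG).mul (hπ.mul hγi))

theorem HasCompactSupport.gammaFlux (π : EuclideanSpace ℝ (Fin d) → ℝ)
    (γ : EuclideanSpace ℝ (Fin d) → EuclideanSpace ℝ (Fin d)) (hΦ : HasCompactSupport Φ)
    (i : Fin d) : HasCompactSupport (gammaFlux π γ Φ i) := by
  have hG := hΦ.gamma1 Φ
  exact ((((hG.pderiv' i).mul_left).sub ((hΦ.pderiv' i).mul_left)).mul_left).sub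
    (hG.mul_left.mul_right)

theorem pderiv'_gammaFlux (hπ : ContDiff ℝ ∞ π) (hπ0 : ∀ x, π x ≠ 0) (hγ : ContDiff ℝ ∞ γ)
    (hΦ : ContDiff ℝ ∞ Φ) (i : Fin d) (x : EuclideanSpace ℝ (Fin d)) :
    pderiv' (gammaFlux π γ Φ i) i x =
      π x * ((1/2 : ℝ) * (pderiv' (fun y => Real.log (π y)) i x * pderiv' (Gamma1 Φ Φ) i x
          + pderiv' (pderiv' (Gamma1 Φ Φ) i) i x - γ x i * pderiv' (Gamma1 Φ Φ) i x)
        - pderiv' (genL π Φ) i x * pderiv' Φ i x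
        - genL π Φ x * (pderiv' (fun y => Real.log (π y)) i x * pderiv' Φ i x
          + pderiv' (pderiv' Φ i) i x))
      - (1/2 : ℝ) * Gamma1 Φ Φ x * pderiv' (fun y => π y * γ y i) i x := by
  have hπ' : Differentiable ℝ π := hπ.differentiable (by simp)
  have hγi : Differentiable ℝ (fun y => γ y i) :=
    (contDiff_euclidean.mp hγ i).differentiable (by simp)
  have hG : Differentiable ℝ (Gamma1 Φ Φ) := (hΦ.gamma1 hΦ).differentiable (by simp)
  have hG' : Differentiable ℝ (pderiv' (Gamma1 Φ Φ) i) :=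
    ((hΦ.gamma1 hΦ).pderiv' i).differentiable (by simp)
  have hL : Differentiable ℝ (genL π Φ) := (hπ.genL hπ0 hΦ).differentiable (by simp)
  have hΦ' : Differentiable ℝ (pderiv' Φ i) := (hΦ.pderiv' i).differentiable (by simp)
  unfold gammaFlux
  simp (disch := fun_prop) only [pderiv'_sub, pderiv'_mul, pderiv'_const]
  rw [← pderiv'_log_mul_self (hπ' x) (hπ0 x)]
  ring

theorem gamma2_add_gammaI_mul_eq (hπ : ContDiff ℝ ∞ π) (hπ0 : ∀ x, π x ≠ 0)
    (hγ : ContDiff ℝ ∞ γ) (hΦ : ContDiff ℝ ∞ Φ) (x : EuclideanSpace ℝ (Fin d)) :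
    (Gamma2 π Φ x + GammaI π γ Φ x) * π x =
      genL π Φ x * (genL π Φ x + ∑ i, pderiv' Φ i x * γ x i) * π x
        + ∑ i, pderiv' (gammaFlux π γ Φ i) i x
        + (1/2 : ℝ) * Gamma1 Φ Φ x * ∑ i, pderiv' (fun y => π y * γ y i) i x := by
  have hΓ₂ : Gamma2 π Φ x =
      (1/2 : ℝ) * (∑ i, pderiv' (fun y => Real.log (π y)) i x * pderiv' (Gamma1 Φ Φ) i x
        + ∑ i, pderiv' (pderiv' (Gamma1 Φ Φ) i) i x)
      - ∑ i, pderiv' (genL π Φ) i x * pderiv' Φ i x := rfl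
  have hL : genL π Φ x = ∑ i, pderiv' (fun y => Real.log (π y)) i x * pderiv' Φ i x
      + ∑ i, pderiv' (pderiv' Φ i) i x := rfl
  have hflux_div : ∑ i, pderiv' (gammaFlux π γ Φ i) i x =
      π x * ((1/2 : ℝ) * (∑ i, pderiv' (fun y => Real.log (π y)) i x * pderiv' (Gamma1 Φ Φ) i x
          + ∑ i, pderiv' (pderiv' (Gamma1 Φ Φ) i) i x - ∑ i, γ x i * pderiv' (Gamma1 Φ Φ) i x)
        - ∑ i, pderiv' (genL π Φ) i x * pderiv' Φ i x
        - genL π Φ x * (∑ i, pderiv' (fun y => Real.log (π y)) i x * pderiv' Φ i x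
          + ∑ i, pderiv' (pderiv' Φ i) i x))
      - (1/2 : ℝ) * Gamma1 Φ Φ x * ∑ i, pderiv' (fun y => π y * γ y i) i x := by
    simp only [pderiv'_gammaFlux hπ hπ0 hγ hΦ, mul_add, mul_sub, Finset.mul_sum,
      Finset.sum_add_distrib, Finset.sum_sub_distrib]
  rw [hflux_div, hΓ₂, GammaI, hL]
  ring

end GammaIdentity

theorem integrated_gamma_identity_general
    (d : ℕ)
    (π : EuclideanSpace ℝ (Fin d) → ℝ) (hπ : ContDiff ℝ (⊤ : ℕ∞) π)
    (hπpos : ∀ x, 0 < π x)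
    (γ : EuclideanSpace ℝ (Fin d) → EuclideanSpace ℝ (Fin d))
    (hγ : ContDiff ℝ (⊤ : ℕ∞) γ)
    (hstat : ∀ x, ∑ i, pderiv' (fun y => π y * γ y i) i x = 0)
    (Φ : EuclideanSpace ℝ (Fin d) → ℝ) (hΦ : ContDiff ℝ (⊤ : ℕ∞) Φ)
    (hΦc : HasCompactSupport Φ) :
    ∫ x, (Gamma2 π Φ x + GammaI π γ Φ x) * π x =
      ∫ x, genL π Φ x * (genL π Φ x + ∑ i, pderiv' Φ i x * γ x i) * π x := by
  have hπ0 : ∀ x, π x ≠ 0 := fun x => (hπpos x).ne'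
  calc ∫ x, (Gamma2 π Φ x + GammaI π γ Φ x) * π x
      = ∫ x, (genL π Φ x * (genL π Φ x + ∑ i, pderiv' Φ i x * γ x i) * π x
          + ∑ i, pderiv' (gammaFlux π γ Φ i) i x) := by
        congr 1 with x
        rw [gamma2_add_gammaI_mul_eq hπ hπ0 hγ hΦ x, hstat x, mul_zero, add_zero]
    _ = ∫ x, genL π Φ x * (genL π Φ x + ∑ i, pderiv' Φ i x * γ x i) * π x :=
        integral_add_sum_pderiv' _ (fun i => (hπ.gammaFlux hπ0 hγ hΦ i).of_le (by simp))
          (fun i => hΦc.gammaFlux π γ i)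

/-- Lemma 4.1: integrated Gamma identity at the invariant measure:
`∫ (Γ₂(Φ,Φ) + Γ_I(Φ,Φ)) π = ∫ L̃Φ (L̃Φ + ⟨∇Φ, γ⟩) π`. -/
theorem integrated_gamma_identity
    (d : ℕ) (hd : 1 ≤ d)
    (π : EuclideanSpace ℝ (Fin d) → ℝ) (hπ : ContDiff ℝ (⊤ : ℕ∞) π)
    (hπpos : ∀ x, 0 < π x)
    (γ : EuclideanSpace ℝ (Fin d) → EuclideanSpace ℝ (Fin d))
    (hγ : ContDiff ℝ (⊤ : ℕ∞) γ)
    (hstat : ∀ x, ∑ i, pderiv' (fun y => π y * γ y i) i x = 0)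
    (Φ : EuclideanSpace ℝ (Fin d) → ℝ) (hΦ : ContDiff ℝ (⊤ : ℕ∞) Φ)
    (hΦc : HasCompactSupport Φ) :
    ∫ x, (Gamma2 π Φ x + GammaI π γ Φ x) * π x =
      ∫ x, genL π Φ x * (genL π Φ x + ∑ i, pderiv' Φ i x * γ x i) * π x :=
  integrated_gamma_identity_general d π hπ hπpos γ hγ hstat Φ hΦ hΦc
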